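/- Let s ≥ 1, b ∈ {0,…,s−1}, and N_t = s(n−τ)−t(k−1). Suppose Q^(b),…,Q^(ℓ) ∈ F[x] with deg Q^(t) < N_t and B^(b) ∈ F[x] with deg B^(b) < ℓ(n−k)−sτ+b satisfy Σ_{t=b}^{ℓ} C(t,b)·Q^(t)(x)·R(x)^{t−b} = B^(b)(x)·G(x)^{s−b}. Define the reciprocals Λ^(t)(x) = x^{N_t−1}·Q^(t)(1/x), B̄^(b)(x) = x^{ℓ(n−k)−sτ+b−1}·B^(b)(1/x), R̄(x) = x^{n−1}·R(1/x) and Ḡ(x) = x^n·G(1/x). Then the exact polynomial identity Σ_{t=b}^{ℓ} C(t,b)·Λ^(t)(x)·x^{(ℓ−t)(n−k)}·R̄(x)^{t−b} = B̄^(b)(x)·Ḡ(x)^{s−b} holds, where C(t,b) denotes the binomial coefficient (reduced in F). -/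

import Mathlib

/-!
Reflection `A ↦ x^m A(1/x)` is additive, and multiplicative as soon as every factor is
reflected at a formal degree bounding its actual degree, the formal degrees adding up.
Every summand `C(t,b) Q^(t) R^(t-b)` on the left and the product `B^(b) G^(s-b)` on the right
have the same formal degree `ℓ(n-k) + (s-b)n + b - sτ - 1`, once the missing powers of `x`
are supplied by the factors `x^((ℓ-t)(n-k))`. Reflecting the given identity at this degree
gives the claim; summands with `Q^(t) = 0`, and the right side when `B^(b) = 0`, vanish
whatever degree they are reflected at, which takes care of the truncated subtractions.
-/

open Polynomial

namespace Polynomial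

variable {R : Type*}

theorem reflect_sum [Semiring R] {ι : Type*} (s : Finset ι) (f : ι → R[X]) (N : ℕ) :
    (∑ i ∈ s, f i).reflect N = ∑ i ∈ s, (f i).reflect N :=
  map_sum (⟨⟨reflect N, reflect_zero⟩, fun f g => reflect_add f g N⟩ : R[X] →+ R[X]) f s

variable [CommSemiring R]

theorem reflect_pow_of_natDegree_le {p : R[X]} {N : ℕ} (hp : p.natDegree ≤ N) (e : ℕ) :
    (p ^ e).reflect (e * N) = p.reflect N ^ e := by
  induction e with
  | zero => simp
  | succ e ih =>
    rw [pow_succ, Nat.succ_mul, reflect_mul _ _ (natDegree_pow_le_of_le e hp) hp, ih, pow_succ]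

theorem reflect_natCast_mul_mul_pow (c : ℕ) {p q : R[X]} {N m : ℕ}
    (hp : p.natDegree ≤ N) (hq : q.natDegree ≤ m) (e a : ℕ) :
    ((c : R[X]) * p * q ^ e).reflect (N + e * m + a) =
      (c : R[X]) * p.reflect N * X ^ a * q.reflect m ^ e := by
  have hc : (C (c : R)).natDegree ≤ a := by simp
  rw [← map_natCast C, mul_assoc, mul_comm (C _),
    reflect_mul _ _ (natDegree_mul_le_of_le hp (natDegree_pow_le_of_le e hq)) hc,
    reflect_mul _ _ hp (natDegree_pow_le_of_le e hq), reflect_pow_of_natDegree_le hq, reflect_C]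
  ring

end Polynomial

namespace GuruswamiSudan

theorem term_formalDegree_eq {n k s ℓ τ b t : ℕ} (hk : 1 ≤ k) (hkn : k ≤ n) (hbs : b ≤ s)
    (hbt : b ≤ t) (htℓ : t ≤ ℓ) (hN : t * (k - 1) < s * (n - τ)) :
    (s * (n - τ) - t * (k - 1) - 1) + (t - b) * (n - 1) + (ℓ - t) * (n - k) =
      ℓ * (n - k) + (s - b) * n + b - s * τ - 1 := by
  have hτ : τ ≤ n := by
    by_contra! h
    simp [Nat.sub_eq_zero_of_le h.le] at hN
  have hN₁ : t * (k - 1) ≤ s * (n - τ) := hN.le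
  have hN₂ : 1 ≤ s * (n - τ) - t * (k - 1) := by omega
  suffices (s * (n - τ) - t * (k - 1) - 1) + (t - b) * (n - 1) + (ℓ - t) * (n - k) +
      (s * τ + 1) = ℓ * (n - k) + (s - b) * n + b by omega
  zify [hk, hkn, hbs, hbt, htℓ, hτ, hN₁, hN₂, hk.trans hkn]
  ring

end GuruswamiSudan

open GuruswamiSudan in
theorem guruswami_sudan_reversed_identity_general
    (F : Type*) [Field F] (n k s ℓ τ b : ℕ) (hk : 1 ≤ k) (hkn : k ≤ n)
    (hb : b < s)
    (α : Fin n → F)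
    (G : F[X]) (hG : G = ∏ i, (X - C (α i)))
    (R : F[X]) (hRdeg : R.degree < (n : ℕ))
    (Q : ℕ → F[X])
    (hQd : ∀ t, b ≤ t → t ≤ ℓ →
      (Q t).degree < ((s * (n - τ) - t * (k - 1) : ℕ) : WithBot ℕ))
    (B : F[X])
    (hdB : B.degree < ((ℓ * (n - k) + b - s * τ : ℕ) : WithBot ℕ))
    (heq : ∑ t ∈ Finset.Icc b ℓ, (t.choose b : F[X]) * Q t * R ^ (t - b) =
      B * G ^ (s - b)) :
    ∑ t ∈ Finset.Icc b ℓ,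
        (t.choose b : F[X]) * (Q t).reflect (s * (n - τ) - t * (k - 1) - 1) *
          X ^ ((ℓ - t) * (n - k)) * (R.reflect (n - 1)) ^ (t - b) =
      B.reflect (ℓ * (n - k) + b - s * τ - 1) * (G.reflect n) ^ (s - b) := by
  set D := ℓ * (n - k) + (s - b) * n + b - s * τ - 1 with hD
  have hRd : R.natDegree ≤ n - 1 := by
    rcases eq_or_ne R 0 with rfl | hR
    · simp
    · have := (natDegree_lt_iff_degree_lt hR).mpr hRdeg
      omega
  have hGd : G.natDegree ≤ n := hG ▸ (natDegree_prod_le _ _).trans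
    ((Finset.sum_le_sum fun i _ => natDegree_X_sub_C_le (α i)).trans (by simp))
  have hL : ∀ t ∈ Finset.Icc b ℓ, ((t.choose b : F[X]) * Q t * R ^ (t - b)).reflect D =
      (t.choose b : F[X]) * (Q t).reflect (s * (n - τ) - t * (k - 1) - 1) *
        X ^ ((ℓ - t) * (n - k)) * (R.reflect (n - 1)) ^ (t - b) := by
    intro t ht
    obtain ⟨hbt, htℓ⟩ := Finset.mem_Icc.mp ht
    rcases eq_or_ne (Q t) 0 with hQ | hQ
    · simp [hQ]
    have hQd' := (natDegree_lt_iff_degree_lt hQ).mpr (hQd t hbt htℓ)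
    rw [hD, ← term_formalDegree_eq (τ := τ) hk hkn hb.le hbt htℓ (by omega),
      reflect_natCast_mul_mul_pow _ (by omega) hRd]
  have hRHS : B.reflect (ℓ * (n - k) + b - s * τ - 1) * (G.reflect n) ^ (s - b) =
      (B * G ^ (s - b)).reflect D := by
    rcases eq_or_ne B 0 with rfl | hB
    · simp
    have hBd := (natDegree_lt_iff_degree_lt hB).mpr hdB
    rw [show D = (ℓ * (n - k) + b - s * τ - 1) + (s - b) * n by omega,
      reflect_mul _ _ (by omega) (natDegree_pow_le_of_le _ hGd), reflect_pow_of_natDegree_le hGd]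
  rw [← Finset.sum_congr rfl hL, ← reflect_sum, heq, hRHS]

/-- Reversing the coefficients of the Guruswami–Sudan identity
`Σ_{t=b}^{ℓ} C(t,b)·Q^(t)·R^{t−b} = B^(b)·G^{s−b}` yields the exact polynomial
identity `Σ_{t=b}^{ℓ} C(t,b)·Λ^(t)(x)·x^{(ℓ−t)(n−k)}·R̄(x)^{t−b} = B̄^(b)(x)·Ḡ(x)^{s−b}`,
where the reciprocal of a polynomial `A` of formal degree `m` is
`reflect m A = x^m·A(1/x)` and `N_t = s(n−τ)−t(k−1)`. -/
theorem guruswami_sudan_reversed_identity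
    (F : Type*) [Field F] (n k s ℓ τ b : ℕ) (hk : 1 ≤ k) (hkn : k ≤ n)
    (hs : 1 ≤ s) (hb : b < s)
    (α υ' : Fin n → F) (hα : Function.Injective α) (hα0 : ∀ i, α i ≠ 0)
    (hυ' : ∀ i, υ' i ≠ 0)
    (r : Fin n → F)
    (G : F[X]) (hG : G = ∏ i, (X - C (α i)))
    (R : F[X]) (hRdeg : R.degree < (n : ℕ))
    (hR : ∀ i, R.eval (α i) = r i / υ' i)
    (Q : ℕ → F[X])
    (hQd : ∀ t, b ≤ t → t ≤ ℓ →
      (Q t).degree < ((s * (n - τ) - t * (k - 1) : ℕ) : WithBot ℕ))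
    (B : F[X])
    (hdB : B.degree < ((ℓ * (n - k) + b - s * τ : ℕ) : WithBot ℕ))
    (heq : ∑ t ∈ Finset.Icc b ℓ, (t.choose b : F[X]) * Q t * R ^ (t - b) =
      B * G ^ (s - b)) :
    ∑ t ∈ Finset.Icc b ℓ,
        (t.choose b : F[X]) * (Q t).reflect (s * (n - τ) - t * (k - 1) - 1) *
          X ^ ((ℓ - t) * (n - k)) * (R.reflect (n - 1)) ^ (t - b) =
      B.reflect (ℓ * (n - k) + b - s * τ - 1) * (G.reflect n) ^ (s - b) :=
  guruswami_sudan_reversed_identity_general F n k s ℓ τ b hk hkn hb α G hG R hRdeg Q hQd B hdB heq
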